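/- arXiv:2412.20177 — 2 statements merged into one kernel-verified Lean document; each statement's English description precedes it below -/
import Mathlib

section
/- (Theorem 1 of the paper: MaxGrowth generates both valid and complete relaxed co-movement patterns.) (Validity) For every feasible sequence S = [CL₁, …, CLₙ] with n ≥ k, the pair ⟨λ(S), [CL₁.c, …, CLₙ.c]⟩ is a relaxed co-movement pattern. (Completeness) Conversely, for every relaxed co-movement pattern ⟨O, P⟩ with P = [c₁, …, cₙ], there exists a feasible sequence S = [CL₁, …, CLₙ] of length n whose camera route equals P (CLₜ.c = cₜ for all t), such that O ⊆ λ(S) and ⟨λ(S), P⟩ is itself a relaxed co-movement pattern containing ⟨O, P⟩ object-wise. -/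
/-- A cluster: a finite set of objects, a camera, and a position map. -/
structure Cluster (ι C : Type*) where
  O : Finset ι
  c : C
  p : ι → ℕ

variable {ι C : Type*}

/-- `CL` is a valid cluster w.r.t. parameters `m`, `ε` and the travel-path data
(`len` = path lengths, `cam` = camera maps, `s` = entrance timestamps). -/
def IsCluster (m : ℕ) (ε : ℝ) (len : ι → ℕ) (cam : ι → ℕ → C) (s : ι → ℕ → ℝ)
    (CL : Cluster ι C) : Prop :=
  m ≤ CL.O.card ∧
  (∀ o ∈ CL.O, CL.p o < len o ∧ cam o (CL.p o) = CL.c) ∧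
  (∀ o ∈ CL.O, ∀ o' ∈ CL.O, |s o (CL.p o) - s o' (CL.p o')| ≤ ε)

/-- `o` is a core object of the cluster sequence `S` (gap tolerance `d`). -/
def IsCore (d : ℕ) (S : List (Cluster ι C)) (o : ι) : Prop :=
  (∀ CL ∈ S, o ∈ CL.O) ∧
  S.Chain' fun CL CL' => 0 < CL'.p o - CL.p o ∧ CL'.p o - CL.p o ≤ d + 1

/-- `λ(S)`: the set of core objects of the cluster sequence `S`. -/
def coreSet (d : ℕ) (S : List (Cluster ι C)) : Set ι := {o | IsCore d S o}

/-- `CL` is a feasible cluster for the cluster sequence `S`: at least `m` objects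
belong to `CL.O`, are core objects of `S`, and reach `CL` from the last cluster of
`S` within gap tolerance `d`. -/
def FeasibleFor (m d : ℕ) (S : List (Cluster ι C)) (CL : Cluster ι C) : Prop :=
  ∃ CLn ∈ S.getLast?, ∃ T : Finset ι, m ≤ T.card ∧
    ∀ o ∈ T, o ∈ CL.O ∧ o ∈ coreSet d S ∧
      0 < CL.p o - CLn.p o ∧ CL.p o - CLn.p o ≤ d + 1

/-- `S` is a feasible sequence: it consists of a single cluster, or its last cluster
is a feasible cluster for the preceding prefix. -/
def FeasibleSeq (m d : ℕ) (S : List (Cluster ι C)) : Prop :=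
  (∃ CL, S = [CL]) ∨ (∃ S' CL, S = S' ++ [CL] ∧ FeasibleFor m d S' CL)

/-- `⟨O, P⟩` is a relaxed co-movement pattern (VPlatoon) for parameters `m`, `k`,
`d`, `ε`: `O` is a finite set of at least `m` objects, `P` has length at least `k`,
and there are witnessing positions `q` making `P` a `d`-subpath of every member's
travel path along which `O` is `ε`-close. -/
def IsPattern (m k d : ℕ) (ε : ℝ) (len : ι → ℕ) (cam : ι → ℕ → C) (s : ι → ℕ → ℝ)
    (O : Set ι) (P : List C) : Prop :=
  O.Finite ∧ m ≤ O.ncard ∧ k ≤ P.length ∧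
  ∃ q : ι → ℕ → ℕ,
    (∀ o ∈ O, ∀ t : ℕ, (ht : t < P.length) → q o t < len o ∧ cam o (q o t) = P[t]) ∧
    (∀ o ∈ O, ∀ t : ℕ, t + 1 < P.length →
      q o t < q o (t + 1) ∧ q o (t + 1) - q o t ≤ d + 1) ∧
    (∀ t : ℕ, t < P.length → ∀ o ∈ O, ∀ o' ∈ O, |s o (q o t) - s o' (q o' t)| ≤ ε)

/-- `P₁` is a `d`-subpath of `P₂` (as camera sequences): there is a strictly
increasing position map with consecutive gaps at most `d + 1` matching cameras. -/
def IsDSubpath (d : ℕ) (P₁ P₂ : List C) : Prop :=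
  ∃ g : ℕ → ℕ,
    (∀ t : ℕ, (ht : t < P₁.length) → ∃ h : g t < P₂.length, P₁[t] = P₂[g t]) ∧
    (∀ t : ℕ, t + 1 < P₁.length → g t < g (t + 1) ∧ g (t + 1) - g t ≤ d + 1)

/-!
A core object of a feasible sequence `S` visits the cameras of `S` at the positions recorded
by its clusters, which are increasing with gaps at most `d + 1`, and all cluster members are
`ε`-close there; so these positions witness the pattern `⟨λ(S), route(S)⟩`. And `λ(S)` has
at least `m` objects because the last step of a feasible sequence certifies `m` core objects
(for a single cluster, its `m` members are trivially core).

Conversely, slicing a pattern `⟨O, P⟩` at its witness positions gives one cluster with object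
set `O` per camera of `P`. Every member of `O` is then core, and nothing else is, so
`λ(S) = O`, which makes `S` feasible and `⟨λ(S), P⟩` the given pattern.
-/

section Core

variable {d : ℕ} {S : List (Cluster ι C)} {CL : Cluster ι C} {o : ι}

theorem coreSet_subset_of_mem (hCL : CL ∈ S) : coreSet d S ⊆ CL.O :=
  fun _ ho => ho.1 CL hCL

theorem isCore_iff : IsCore d S o ↔ (∀ CL ∈ S, o ∈ CL.O) ∧
    S.IsChain fun CL CL' => 0 < CL'.p o - CL.p o ∧ CL'.p o - CL.p o ≤ d + 1 :=
  Iff.rfl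

theorem isCore_singleton_iff : IsCore d [CL] o ↔ o ∈ CL.O := by
  simp [isCore_iff]

theorem isCore_append_singleton_iff :
    IsCore d (S ++ [CL]) o ↔ IsCore d S o ∧ o ∈ CL.O ∧
      ∀ CLn ∈ S.getLast?, 0 < CL.p o - CLn.p o ∧ CL.p o - CLn.p o ≤ d + 1 := by
  simp [isCore_iff, List.isChain_append, or_imp, forall_and, and_assoc, and_left_comm]

end Core

section Feasible

variable {m d : ℕ} {S : List (Cluster ι C)}

theorem FeasibleSeq.exists_finset_subset_coreSet (hS : ∀ CL ∈ S, m ≤ CL.O.card)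
    (h : FeasibleSeq m d S) : ∃ T : Finset ι, m ≤ T.card ∧ ↑T ⊆ coreSet d S := by
  rcases h with ⟨CL, rfl⟩ | ⟨S', CL, rfl, CLn, hCLn, T, hT, hTS⟩
  · exact ⟨CL.O, hS CL (by simp), fun o ho => isCore_singleton_iff.2 ho⟩
  · refine ⟨T, hT, fun o ho => ?_⟩
    obtain ⟨hoCL, hcore, hgap⟩ := hTS o ho
    exact isCore_append_singleton_iff.2 ⟨hcore, hoCL, fun CLn' h => Option.mem_unique hCLn h ▸ hgap⟩

theorem feasibleSeq_of_finset_subset_coreSet (hne : S ≠ []) {T : Finset ι} (hT : m ≤ T.card)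
    (hTS : ↑T ⊆ coreSet d S) : FeasibleSeq m d S := by
  obtain ⟨S', CL, rfl⟩ := (S.eq_nil_or_concat').resolve_left hne
  rcases S'.eq_nil_or_concat' with rfl | ⟨S'', CLn, rfl⟩
  · exact .inl ⟨CL, rfl⟩
  refine .inr ⟨_, CL, rfl, CLn, by simp, T, hT, fun o ho => ?_⟩
  obtain ⟨hcore, hoCL, hgap⟩ := isCore_append_singleton_iff.1 (hTS ho)
  exact ⟨hoCL, hcore, hgap CLn (by simp)⟩

theorem FeasibleSeq.ne_nil (h : FeasibleSeq m d S) : S ≠ [] := by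
  rcases h with ⟨CL, rfl⟩ | ⟨S', CL, rfl, -⟩ <;> simp

end Feasible

section Pattern

variable {m k d : ℕ} {ε : ℝ} {len : ι → ℕ} {cam : ι → ℕ → C} {s : ι → ℕ → ℝ}

theorem isPattern_coreSet {S : List (Cluster ι C)} (hS : ∀ CL ∈ S, IsCluster m ε len cam s CL)
    (hfeas : FeasibleSeq m d S) (hk : k ≤ S.length) :
    IsPattern m k d ε len cam s (coreSet d S) (S.map Cluster.c) := by
  obtain ⟨CL₀, hCL₀⟩ := List.exists_mem_of_ne_nil _ hfeas.ne_nil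
  have hfin : (coreSet d S).Finite := CL₀.O.finite_toSet.subset (coreSet_subset_of_mem hCL₀)
  obtain ⟨T, hT, hTS⟩ := hfeas.exists_finset_subset_coreSet fun CL h => (hS CL h).1
  have hq : ∀ o t (ht : t < S.length), (S.map (·.p o)).getD t 0 = S[t].p o := by
    intro o t ht
    rw [List.getD_eq_getElem _ _ (by simpa), List.getElem_map]
  refine ⟨hfin, ?_, by simpa, fun o t => (S.map (·.p o)).getD t 0, ?_, ?_, ?_⟩
  · calc m ≤ T.card := hT
      _ = (T : Set ι).ncard := (Set.ncard_coe_finset T).symm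
      _ ≤ (coreSet d S).ncard := Set.ncard_le_ncard hTS hfin
  · intro o ho t ht
    rw [List.length_map] at ht
    simp only [hq o t ht, List.getElem_map]
    have hmem := S.getElem_mem ht
    exact (hS _ hmem).2.1 o (ho.1 _ hmem)
  · intro o ho t ht
    rw [List.length_map] at ht
    have := List.isChain_iff_getElem.1 (isCore_iff.1 ho).2 t ht
    simp only [hq o t (by omega), hq o (t + 1) ht]
    omega
  · intro t ht o ho o' ho'
    rw [List.length_map] at ht
    simp only [hq o t ht, hq o' t ht]
    have hmem := S.getElem_mem ht
    exact (hS _ hmem).2.2 o (ho.1 _ hmem) o' (ho'.1 _ hmem)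

def patternClusters (O : Finset ι) (P : List C) (q : ι → ℕ → ℕ) : List (Cluster ι C) :=
  P.mapIdx fun t c => ⟨O, c, fun o => q o t⟩

section patternClusters

variable {O : Finset ι} {P : List C} {q : ι → ℕ → ℕ}

@[simp]
theorem length_patternClusters : (patternClusters O P q).length = P.length :=
  List.length_mapIdx

@[simp]
theorem getElem_patternClusters {t : ℕ} (ht : t < (patternClusters O P q).length) :
    (patternClusters O P q)[t] = ⟨O, P[t]'(by simpa using ht), fun o => q o t⟩ :=
  List.getElem_mapIdx

theorem map_c_patternClusters : (patternClusters O P q).map Cluster.c = P :=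
  List.ext_getElem (by simp) (by simp)

theorem coreSet_patternClusters (hP : P ≠ [])
    (hq : ∀ o ∈ O, ∀ t, t + 1 < P.length → q o t < q o (t + 1) ∧ q o (t + 1) - q o t ≤ d + 1) :
    coreSet d (patternClusters O P q) = O := by
  refine subset_antisymm ?_ fun o ho => isCore_iff.2 ⟨?_, List.isChain_iff_getElem.2 ?_⟩
  · have h0 : 0 < (patternClusters O P q).length := by simpa using List.length_pos_of_ne_nil hP
    simpa using coreSet_subset_of_mem (List.getElem_mem h0)
  · intro CL hCL
    obtain ⟨t, ht, rfl⟩ := List.mem_mapIdx.1 hCL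
    exact ho
  · intro t ht
    have := hq o ho t (by simpa using ht)
    simp only [getElem_patternClusters]
    omega

end patternClusters

theorem exists_feasibleSeq_of_isPattern (hk : 1 ≤ k) {O : Set ι} {P : List C}
    (h : IsPattern m k d ε len cam s O P) :
    ∃ S : List (Cluster ι C), (∀ CL ∈ S, IsCluster m ε len cam s CL) ∧ FeasibleSeq m d S ∧
      S.map Cluster.c = P ∧ O ⊆ coreSet d S ∧ IsPattern m k d ε len cam s (coreSet d S) P := by
  obtain ⟨hfin, hm, hkP, q, hcam, hgap, hclose⟩ := id h
  have hP : P ≠ [] := List.ne_nil_of_length_pos (by omega)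
  have hcore : coreSet d (patternClusters hfin.toFinset P q) = O := by
    rw [coreSet_patternClusters hP fun o ho => hgap o (hfin.mem_toFinset.1 ho), hfin.coe_toFinset]
  have hcard : m ≤ hfin.toFinset.card := by rwa [← Set.ncard_eq_toFinset_card O hfin]
  refine ⟨patternClusters hfin.toFinset P q, ?_, ?_, map_c_patternClusters, hcore.ge,
    by rwa [hcore]⟩
  · intro CL hCL
    obtain ⟨t, ht, rfl⟩ := List.mem_mapIdx.1 hCL
    refine ⟨hcard, fun o ho => hcam o (hfin.mem_toFinset.1 ho) t ht, fun o ho o' ho' => ?_⟩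
    exact hclose t ht o (hfin.mem_toFinset.1 ho) o' (hfin.mem_toFinset.1 ho')
  · exact feasibleSeq_of_finset_subset_coreSet (by simpa [patternClusters] using hP) hcard
      (by rw [hcore, hfin.coe_toFinset])

end Pattern

theorem maxGrowth_valid_and_complete_general {ι C : Type*} (m k d : ℕ) (hk : 1 ≤ k)
    (ε : ℝ) (len : ι → ℕ) (cam : ι → ℕ → C) (s : ι → ℕ → ℝ) :
    (∀ S : List (Cluster ι C),
      (∀ CL ∈ S, IsCluster m ε len cam s CL) →
      FeasibleSeq m d S → k ≤ S.length →
      IsPattern m k d ε len cam s (coreSet d S) (S.map Cluster.c)) ∧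
    (∀ (O : Set ι) (P : List C), IsPattern m k d ε len cam s O P →
      ∃ S : List (Cluster ι C),
        (∀ CL ∈ S, IsCluster m ε len cam s CL) ∧
        FeasibleSeq m d S ∧
        S.map Cluster.c = P ∧
        O ⊆ coreSet d S ∧
        IsPattern m k d ε len cam s (coreSet d S) P) :=
  ⟨fun _ => isPattern_coreSet, fun _ _ => exists_feasibleSeq_of_isPattern hk⟩

/-- Theorem 1 of the paper: MaxGrowth generates both valid and complete relaxed
co-movement patterns. (Validity) Every feasible sequence `S` of valid clusters
with length at least `k` yields the relaxed co-movement pattern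
`⟨λ(S), route(S)⟩`. (Completeness) Every relaxed co-movement pattern `⟨O, P⟩`
arises from a feasible sequence `S` of valid clusters whose camera route equals
`P`, with `O ⊆ λ(S)` and `⟨λ(S), P⟩` itself a relaxed co-movement pattern
containing `⟨O, P⟩` object-wise. -/
theorem maxGrowth_valid_and_complete {ι C : Type*} (m k d : ℕ) (hk : 1 ≤ k)
    (ε : ℝ) (hε : 0 ≤ ε)
    (len : ι → ℕ) (cam : ι → ℕ → C) (s : ι → ℕ → ℝ)
    (hs : ∀ (o : ι) (i j : ℕ), i < j → j < len o → s o i < s o j) :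
    (∀ S : List (Cluster ι C),
      (∀ CL ∈ S, IsCluster m ε len cam s CL) →
      FeasibleSeq m d S → k ≤ S.length →
      IsPattern m k d ε len cam s (coreSet d S) (S.map Cluster.c)) ∧
    (∀ (O : Set ι) (P : List C), IsPattern m k d ε len cam s O P →
      ∃ S : List (Cluster ι C),
        (∀ CL ∈ S, IsCluster m ε len cam s CL) ∧
        FeasibleSeq m d S ∧
        S.map Cluster.c = P ∧
        O ⊆ coreSet d S ∧
        IsPattern m k d ε len cam s (coreSet d S) P) :=
  maxGrowth_valid_and_complete_general m k d hk ε len cam s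
end

section
/- (Lemma 5 of the paper, the root pruning rule, stated with the hypotheses needed by its proof.) Let S be a feasible sequence whose last cluster has position map p_last, and let CL be a cluster with position map p such that CL.O ⊆ λ(S) and 0 < p(o) − p_last(o) ≤ d + 1 for every o ∈ CL.O (so CL is a feasible cluster for S and λ(S ++ [CL]) = CL.O). Let S' = [CL'₁, …, CL'ᵣ] be any cluster sequence with CL'₁ = CL such that every nonempty prefix of S' is a feasible sequence. Then: (1) λ(S ++ S'ⱼ) = λ(S'ⱼ) for every nonempty prefix S'ⱼ of S'; (2) every prefix of S ++ S' that strictly extends S is a feasible sequence; and consequently, if |S'| ≥ k, the pattern ⟨λ(S'), route(S')⟩ is not maximal, since it is dominated by the relaxed co-movement pattern ⟨λ(S ++ S'), route(S ++ S')⟩, which has the same object set and a strictly longer route containing route(S') as a consecutive suffix. -/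
variable {ι C : Type*}

/-! Every core object of a sequence through `CL` lies in `CL.O`, and every member of `CL.O` is
already a core object of `S` that reaches `CL` from the last cluster of `S` within gap `d + 1`.
Hence prepending `S` to a sequence starting at `CL` changes neither its core set nor any of its
feasibility conditions. The feasible sequence `S ++ S'` then carries a pattern with the same
objects as `⟨λ(S'), route(S')⟩` along a strictly longer route with `route(S')` as a suffix. -/

lemma isCore_append {d : ℕ} {L₁ L₂ : List (Cluster ι C)} (h₁ : L₁ ≠ []) (h₂ : L₂ ≠ [])
    (o : ι) :
    IsCore d (L₁ ++ L₂) o ↔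
      IsCore d L₁ o ∧ IsCore d L₂ o ∧
      0 < (L₂.head h₂).p o - (L₁.getLast h₁).p o ∧
      (L₂.head h₂).p o - (L₁.getLast h₁).p o ≤ d + 1 := by
  unfold IsCore
  rw [List.Chain', List.isChain_append, List.getLast?_eq_some_getLast h₁,
    List.head?_eq_some_head h₂]
  simp only [List.mem_append, Option.mem_def, Option.some.injEq, forall_eq']
  constructor
  · rintro ⟨hmem, hc₁, hc₂, hlink⟩
    exact ⟨⟨fun X hX => hmem X (.inl hX), hc₁⟩, ⟨fun X hX => hmem X (.inr hX), hc₂⟩, hlink⟩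
  · rintro ⟨⟨hm₁, hc₁⟩, ⟨hm₂, hc₂⟩, hlink⟩
    exact ⟨fun X hX => hX.elim (hm₁ X) (hm₂ X), hc₁, hc₂, hlink⟩

lemma coreSet_singleton (d : ℕ) (X : Cluster ι C) : coreSet d [X] = X.O := by
  ext o
  exact ⟨fun ho => ho.1 X (List.mem_singleton_self X), fun ho =>
    ⟨fun Y hY => List.mem_singleton.1 hY ▸ ho, List.isChain_singleton _⟩⟩

lemma coreSet_subset_of_mem_s8 {d : ℕ} {L : List (Cluster ι C)} {X : Cluster ι C} (hX : X ∈ L) :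
    coreSet d L ⊆ X.O :=
  fun _ ho => ho.1 X hX

lemma coreSet_finite {d : ℕ} {L : List (Cluster ι C)} (hL : L ≠ []) : (coreSet d L).Finite :=
  (Finset.finite_toSet _).subset (coreSet_subset_of_mem_s8 (List.head_mem hL))

lemma FeasibleSeq.ne_nil_s8 {m d : ℕ} {L : List (Cluster ι C)} (hL : FeasibleSeq m d L) :
    L ≠ [] := by
  rcases hL with ⟨X, rfl⟩ | ⟨L', X, rfl, -⟩ <;> simp

lemma FeasibleFor.subset_coreSet_append {m d : ℕ} {L : List (Cluster ι C)} {X : Cluster ι C}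
    (hX : FeasibleFor m d L X) :
    ∃ T : Finset ι, m ≤ T.card ∧ (T : Set ι) ⊆ coreSet d (L ++ [X]) := by
  obtain ⟨Y, hY, T, hT, hmem⟩ := hX
  have hL : L ≠ [] := by rintro rfl; simp at hY
  obtain rfl : Y = L.getLast hL := by simpa [List.getLast?_eq_some_getLast hL, eq_comm] using hY
  refine ⟨T, hT, fun o ho => ?_⟩
  obtain ⟨hoX, hcore, hgap⟩ := hmem o ho
  have hoX' : o ∈ coreSet d [X] := by rwa [coreSet_singleton]
  exact (isCore_append hL (List.cons_ne_nil X []) o).2 ⟨hcore, hoX', hgap⟩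

theorem FeasibleSeq.le_ncard_coreSet {m d : ℕ} {L : List (Cluster ι C)}
    (hL : FeasibleSeq m d L) (hcard : ∀ X ∈ L, m ≤ X.O.card) : m ≤ (coreSet d L).ncard := by
  rcases hL with ⟨X, rfl⟩ | ⟨L', X, rfl, hX⟩
  · rw [coreSet_singleton, Set.ncard_coe_finset]
    exact hcard X (List.mem_singleton_self X)
  · obtain ⟨T, hT, hsub⟩ := hX.subset_coreSet_append
    calc m ≤ T.card := hT
      _ = (T : Set ι).ncard := (Set.ncard_coe_finset T).symm
      _ ≤ _ := Set.ncard_le_ncard hsub (coreSet_finite (by simp))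

theorem FeasibleSeq.isPattern {m k d : ℕ} {ε : ℝ} {len : ι → ℕ} {cam : ι → ℕ → C}
    {s : ι → ℕ → ℝ} {L : List (Cluster ι C)} (hL : FeasibleSeq m d L)
    (hvalid : ∀ X ∈ L, IsCluster m ε len cam s X) (hk : k ≤ L.length) :
    IsPattern m k d ε len cam s (coreSet d L) (L.map Cluster.c) := by
  have hne := hL.ne_nil_s8
  refine ⟨coreSet_finite hne, hL.le_ncard_coreSet fun X hX => (hvalid X hX).1,
    by simpa using hk, fun o t => (L.getD t (L.head hne)).p o, ?_, ?_, ?_⟩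
  · intro o ho t ht
    rw [List.length_map] at ht
    dsimp only
    rw [List.getD_eq_getElem _ _ ht, List.getElem_map]
    have hmem := L.getElem_mem ht
    exact (hvalid _ hmem).2.1 o (ho.1 _ hmem)
  · intro o ho t ht
    rw [List.length_map] at ht
    have hstep := (List.isChain_iff_getElem.1 ho.2) t ht
    dsimp only
    rw [List.getD_eq_getElem _ _ (by omega), List.getD_eq_getElem _ _ ht]
    exact ⟨by omega, hstep.2⟩
  · intro t ht o ho o' ho'
    rw [List.length_map] at ht
    dsimp only
    rw [List.getD_eq_getElem _ _ ht]
    have hmem := L.getElem_mem ht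
    exact (hvalid _ hmem).2.2 o (ho.1 _ hmem) o' (ho'.1 _ hmem)

lemma isDSubpath_append_left (d : ℕ) (P Q : List C) : IsDSubpath d P (Q ++ P) := by
  refine ⟨fun t => Q.length + t, fun t ht => ⟨by simp; omega, ?_⟩,
    fun t _ => by dsimp only; omega⟩
  simp [List.getElem_append_right]

section Grafting

variable {m d : ℕ} {S : List (Cluster ι C)} {CL : Cluster ι C}

lemma coreSet_append_cons (hS : S ≠ []) (hsub : (CL.O : Set ι) ⊆ coreSet d S)
    (hgap : ∀ o ∈ CL.O,
      0 < CL.p o - (S.getLast hS).p o ∧ CL.p o - (S.getLast hS).p o ≤ d + 1)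
    (T : List (Cluster ι C)) :
    coreSet d (S ++ CL :: T) = coreSet d (CL :: T) := by
  ext o
  refine ⟨fun ho => ((isCore_append hS (List.cons_ne_nil CL T) o).1 ho).2.1, fun ho => ?_⟩
  have hoCL : o ∈ CL.O := ho.1 CL List.mem_cons_self
  exact (isCore_append hS (List.cons_ne_nil CL T) o).2 ⟨hsub hoCL, ho, hgap o hoCL⟩

lemma feasibleSeq_append_cons (hS : S ≠ []) (hsub : (CL.O : Set ι) ⊆ coreSet d S)
    (hgap : ∀ o ∈ CL.O,
      0 < CL.p o - (S.getLast hS).p o ∧ CL.p o - (S.getLast hS).p o ≤ d + 1)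
    (hm : m ≤ CL.O.card) {T : List (Cluster ι C)} (hT : FeasibleSeq m d (CL :: T)) :
    FeasibleSeq m d (S ++ CL :: T) := by
  have hroot : FeasibleSeq m d (S ++ [CL]) :=
    .inr ⟨S, CL, rfl, S.getLast hS, List.getLast?_eq_some_getLast hS, CL.O, hm,
      fun o ho => ⟨ho, hsub ho, hgap o ho⟩⟩
  rcases hT with ⟨X, hX⟩ | ⟨S₁, X, hS₁, hX⟩
  · obtain ⟨-, rfl⟩ := List.cons_eq_cons.1 hX
    exact hroot
  · rcases List.cons_eq_append_iff.1 hS₁ with ⟨rfl, hsingle⟩ | ⟨S₂, rfl, rfl⟩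
    · obtain ⟨-, rfl⟩ := List.cons_eq_cons.1 hsingle
      exact hroot
    · refine .inr ⟨S ++ CL :: S₂, X, by simp, ?_⟩
      obtain ⟨Y, hY, U, hU, hmem⟩ := hX
      refine ⟨Y, by rwa [List.getLast?_append_of_ne_nil _ (List.cons_ne_nil _ _)], U, hU,
        fun o ho => ?_⟩
      rw [coreSet_append_cons hS hsub hgap S₂]
      exact hmem o ho

end Grafting

theorem root_pruning_rule_general {ι C : Type*} (m k d : ℕ) (ε : ℝ)
    (len : ι → ℕ) (cam : ι → ℕ → C) (s : ι → ℕ → ℝ)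
    (S : List (Cluster ι C)) (hSne : S ≠ [])
    (hSvalid : ∀ X ∈ S, IsCluster m ε len cam s X)
    (CL : Cluster ι C) (hCL : IsCluster m ε len cam s CL)
    (hsub : (CL.O : Set ι) ⊆ coreSet d S)
    (hgap : ∀ o ∈ CL.O,
      0 < CL.p o - (S.getLast hSne).p o ∧ CL.p o - (S.getLast hSne).p o ≤ d + 1)
    (S' : List (Cluster ι C)) (hS'head : S'.head? = some CL)
    (hS'valid : ∀ X ∈ S', IsCluster m ε len cam s X)
    (hS'prefix : ∀ S₁ : List (Cluster ι C), S₁ ≠ [] → S₁ <+: S' → FeasibleSeq m d S₁) :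
    (∀ j : ℕ, 1 ≤ j → j ≤ S'.length →
      coreSet d (S ++ S'.take j) = coreSet d (S'.take j)) ∧
    (∀ j : ℕ, 1 ≤ j → j ≤ S'.length → FeasibleSeq m d (S ++ S'.take j)) ∧
    (k ≤ S'.length →
      coreSet d (S ++ S') = coreSet d S' ∧
      IsPattern m k d ε len cam s (coreSet d (S ++ S')) ((S ++ S').map Cluster.c) ∧
      coreSet d S' ⊆ coreSet d (S ++ S') ∧
      IsDSubpath d (S'.map Cluster.c) ((S ++ S').map Cluster.c) ∧
      (S'.map Cluster.c) <:+ ((S ++ S').map Cluster.c) ∧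
      (S'.map Cluster.c).length < ((S ++ S').map Cluster.c).length) := by
  obtain ⟨rest, rfl⟩ : ∃ rest, S' = CL :: rest := List.head?_eq_some_iff.1 hS'head
  have hfeas : ∀ j, 1 ≤ j → j ≤ (CL :: rest).length →
      FeasibleSeq m d (S ++ (CL :: rest).take j) := by
    rintro (_ | j) hj -
    · omega
    · exact feasibleSeq_append_cons hSne hsub hgap hCL.1
        (hS'prefix _ (List.cons_ne_nil _ _) (List.take_prefix (j + 1) (CL :: rest)))
  have hfull := hfeas (CL :: rest).length le_add_self le_rfl
  rw [List.take_length] at hfull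
  refine ⟨?_, hfeas, fun hk => ?_⟩
  · rintro (_ | j) hj -
    · omega
    · exact coreSet_append_cons hSne hsub hgap (rest.take j)
  have hcoreS' : coreSet d (S ++ CL :: rest) = coreSet d (CL :: rest) :=
    coreSet_append_cons hSne hsub hgap rest
  have hvalid : ∀ X ∈ S ++ CL :: rest, IsCluster m ε len cam s X :=
    fun X hX => (List.mem_append.1 hX).elim (hSvalid X) (hS'valid X)
  refine ⟨hcoreS', hfull.isPattern hvalid (by simp at hk ⊢; omega), hcoreS'.symm.subset,
    ?_, ?_, ?_⟩
  · rw [List.map_append]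
    exact isDSubpath_append_left d _ _
  · rw [List.map_append]
    exact List.suffix_append _ _
  · simpa using List.length_pos_iff.2 hSne

/-- Lemma 5 of the paper (the root pruning rule), with the hypotheses needed by
its proof: if the cluster `CL` satisfies `CL.O ⊆ λ(S)` and the gap condition
w.r.t. the last cluster of the feasible sequence `S` (so `CL` is a feasible
cluster for `S`), then for any cluster sequence `S'` starting with `CL` all of
whose nonempty prefixes are feasible: (1) `λ(S ++ S'ⱼ) = λ(S'ⱼ)` for every
nonempty prefix `S'ⱼ` of `S'`; (2) every prefix of `S ++ S'` strictly extending
`S` is a feasible sequence; and (3) if `|S'| ≥ k`, the pattern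
`⟨λ(S'), route(S')⟩` is dominated by the relaxed co-movement pattern
`⟨λ(S ++ S'), route(S ++ S')⟩`, which has the same object set and a strictly
longer route containing `route(S')` as a consecutive suffix — so
`⟨λ(S'), route(S')⟩` is not maximal. -/
theorem root_pruning_rule {ι C : Type*} (m k d : ℕ) (ε : ℝ) (hε : 0 ≤ ε)
    (len : ι → ℕ) (cam : ι → ℕ → C) (s : ι → ℕ → ℝ)
    (hs : ∀ (o : ι) (i j : ℕ), i < j → j < len o → s o i < s o j)
    (S : List (Cluster ι C)) (hSne : S ≠ [])
    (hSfeas : FeasibleSeq m d S)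
    (hSvalid : ∀ X ∈ S, IsCluster m ε len cam s X)
    (CL : Cluster ι C) (hCL : IsCluster m ε len cam s CL)
    (hsub : (CL.O : Set ι) ⊆ coreSet d S)
    (hgap : ∀ o ∈ CL.O,
      0 < CL.p o - (S.getLast hSne).p o ∧ CL.p o - (S.getLast hSne).p o ≤ d + 1)
    (S' : List (Cluster ι C)) (hS'head : S'.head? = some CL)
    (hS'valid : ∀ X ∈ S', IsCluster m ε len cam s X)
    (hS'prefix : ∀ S₁ : List (Cluster ι C), S₁ ≠ [] → S₁ <+: S' → FeasibleSeq m d S₁) :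
    (∀ j : ℕ, 1 ≤ j → j ≤ S'.length →
      coreSet d (S ++ S'.take j) = coreSet d (S'.take j)) ∧
    (∀ j : ℕ, 1 ≤ j → j ≤ S'.length → FeasibleSeq m d (S ++ S'.take j)) ∧
    (k ≤ S'.length →
      coreSet d (S ++ S') = coreSet d S' ∧
      IsPattern m k d ε len cam s (coreSet d (S ++ S')) ((S ++ S').map Cluster.c) ∧
      coreSet d S' ⊆ coreSet d (S ++ S') ∧
      IsDSubpath d (S'.map Cluster.c) ((S ++ S').map Cluster.c) ∧
      (S'.map Cluster.c) <:+ ((S ++ S').map Cluster.c) ∧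
      (S'.map Cluster.c).length < ((S ++ S').map Cluster.c).length) :=
  root_pruning_rule_general m k d ε len cam s S hSne hSvalid CL hCL hsub hgap S' hS'head hS'valid
    hS'prefix
end
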